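/- Let N ≥ 1 and let g : ℝ^N → [0,∞) be integrable with ρ₀ = ∫ g(v) dv and ρ₁ = ∫ g(v)|v| dv finite. Then for every K > 0 there exist a > 0 and b > 0 such that the function h(v,t) = K·exp( −b t − a·(1+|v|²)^{3/4} ) satisfies −∂_t h(v,t) + Δ_v h(v,t) − h(v,t)·∫_{ℝ^N} g(v_*)|v − v_*| dv_* ≥ 0 for all t > 0 and all v ∈ ℝ^N. In particular it suffices to choose a with (9/4)a² ≥ ρ₀ and then b ≥ (3Na)/2 + ρ₀ + ρ₁. -/

import Mathlib

/-!
For a radial function `F(|v|²)` one has `Δ = 2N F' + 4|v|² F''`; for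
`h = K exp(-bt - a(1+|v|²)^{3/4})` this gives `Δh / h =`
`(9/4) a² |v|² (1+|v|²)^{-1/2} + (3/4) a |v|² (1+|v|²)^{-5/4} - (3/2) N a (1+|v|²)^{-1/4}`.
By the triangle inequality the loss term is at most `h (ρ₀ |v| + ρ₁)`. Since
`|v|² / √(1+|v|²) ≥ |v| - 1`, the condition `(9/4) a² ≥ ρ₀` lets the first term of `Δh / h`
absorb `ρ₀ |v|` at the cost of `ρ₀`, and what is left, at most `3Na/2 + ρ₀ + ρ₁`, is
absorbed by `-∂_t h / h = b`.
-/

open MeasureTheory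

noncomputable section

/-- The Laplacian in the velocity variable. -/
def laplacian {N : ℕ} (f : EuclideanSpace ℝ (Fin N) → ℝ)
    (v : EuclideanSpace ℝ (Fin N)) : ℝ :=
  ∑ i : Fin N, iteratedFDeriv ℝ 2 f v ![EuclideanSpace.single i 1, EuclideanSpace.single i 1]

open Real
open scoped RealInnerProductSpace

section Radial

variable {E : Type*} [NormedAddCommGroup E] [InnerProductSpace ℝ E] {F F' : ℝ → ℝ}

theorem hasFDerivAt_comp_norm_sq {x : E} {d : ℝ} (hF : HasDerivAt F d (‖x‖ ^ 2)) :
    HasFDerivAt (fun w : E => F (‖w‖ ^ 2)) (d • (2 : ℕ) • innerSL ℝ x) x :=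
  hF.comp_hasFDerivAt x (hasStrictFDerivAt_norm_sq x).hasFDerivAt

theorem fderiv_fderiv_comp_norm_sq_apply (hF : ∀ s, 0 ≤ s → HasDerivAt F (F' s) s)
    {v : E} {d : ℝ} (hF' : HasDerivAt F' d (‖v‖ ^ 2)) (e : E) :
    fderiv ℝ (fderiv ℝ fun w : E => F (‖w‖ ^ 2)) v e e
      = 2 * F' (‖v‖ ^ 2) * ‖e‖ ^ 2 + 4 * d * ⟪v, e⟫ ^ 2 := by
  have hDF : fderiv ℝ (fun w : E => F (‖w‖ ^ 2)) = fun w => F' (‖w‖ ^ 2) • (2 : ℕ) • innerSL ℝ w :=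
    funext fun w => (hasFDerivAt_comp_norm_sq (hF _ (sq_nonneg ‖w‖))).fderiv
  have hD2F : HasFDerivAt (fun w => F' (‖w‖ ^ 2) • (2 : ℕ) • innerSL ℝ w) _ v :=
    (hasFDerivAt_comp_norm_sq hF').smul ((2 : ℕ) • (innerSL ℝ : E →L[ℝ] E →L[ℝ] ℝ)).hasFDerivAt
  rw [hDF, hD2F.fderiv]
  simp only [add_apply, smul_apply, ContinuousLinearMap.smulRight_apply, innerSL_apply_apply,
    nsmul_eq_mul, Nat.cast_ofNat, smul_eq_mul]
  rw [innerSL_apply_apply, real_inner_self_eq_norm_sq]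
  ring

end Radial

theorem laplacian_comp_norm_sq {N : ℕ} {F F' : ℝ → ℝ} (hF : ∀ s, 0 ≤ s → HasDerivAt F (F' s) s)
    {v : EuclideanSpace ℝ (Fin N)} {d : ℝ} (hF' : HasDerivAt F' d (‖v‖ ^ 2)) :
    laplacian (fun w => F (‖w‖ ^ 2)) v = 2 * N * F' (‖v‖ ^ 2) + 4 * d * ‖v‖ ^ 2 := by
  simp only [laplacian, iteratedFDeriv_two_apply, Matrix.cons_val_zero, Matrix.cons_val_one,
    fderiv_fderiv_comp_norm_sq_apply hF hF', PiLp.norm_single, EuclideanSpace.inner_single_right]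
  simp only [norm_one, one_pow, mul_one, one_mul, conj_trivial, Finset.sum_add_distrib,
    Finset.sum_const, Finset.card_univ, Fintype.card_fin, nsmul_eq_mul, ← Finset.mul_sum,
    ← EuclideanSpace.real_norm_sq_eq]
  ring

section Profile

variable (K a c p : ℝ) {s : ℝ}

theorem hasDerivAt_one_add_rpow (hs : 0 ≤ s) :
    HasDerivAt (fun s : ℝ => (1 + s) ^ p) (p * (1 + s) ^ (p - 1)) s := by
  simpa using ((hasDerivAt_id s).const_add 1).rpow_const (p := p) (Or.inl (by positivity))

theorem hasDerivAt_stretchedExp (hs : 0 ≤ s) :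
    HasDerivAt (fun s : ℝ => K * exp (c - a * (1 + s) ^ p))
      (-(a * p * (1 + s) ^ (p - 1)) * (K * exp (c - a * (1 + s) ^ p))) s :=
  ((((hasDerivAt_one_add_rpow p hs).const_mul a).const_sub c).exp.const_mul K).congr_deriv
    (by ring)

theorem hasDerivAt_deriv_stretchedExp (hs : 0 ≤ s) :
    HasDerivAt (fun s : ℝ => -(a * p * (1 + s) ^ (p - 1)) * (K * exp (c - a * (1 + s) ^ p)))
      (((a * p * (1 + s) ^ (p - 1)) ^ 2 - a * p * (p - 1) * (1 + s) ^ (p - 2))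
        * (K * exp (c - a * (1 + s) ^ p))) s := by
  have hpow := hasDerivAt_one_add_rpow (p - 1) hs
  rw [show p - 1 - 1 = p - 2 by ring] at hpow
  exact (((hpow.const_mul (a * p)).neg).mul (hasDerivAt_stretchedExp K a c p hs)).congr_deriv
    (by simp only [Pi.neg_apply]; ring)

end Profile

/-- `Δ_v h / h` for `h(v) = K exp(c - a(1+|v|²)^p)`, as a function of `s = |v|²`. -/
def stretchedExpLaplacianRatio (N : ℕ) (a p s : ℝ) : ℝ :=
  4 * s * ((a * p * (1 + s) ^ (p - 1)) ^ 2 - a * p * (p - 1) * (1 + s) ^ (p - 2))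
    - 2 * N * a * p * (1 + s) ^ (p - 1)

theorem laplacian_stretchedExp {N : ℕ} (K a c p : ℝ) (v : EuclideanSpace ℝ (Fin N)) :
    laplacian (fun w => K * exp (c - a * (1 + ‖w‖ ^ 2) ^ p)) v
      = stretchedExpLaplacianRatio N a p (‖v‖ ^ 2) * (K * exp (c - a * (1 + ‖v‖ ^ 2) ^ p)) := by
  rw [laplacian_comp_norm_sq (fun s hs => hasDerivAt_stretchedExp K a c p hs)
    (hasDerivAt_deriv_stretchedExp K a c p (sq_nonneg ‖v‖)), stretchedExpLaplacianRatio]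
  ring

theorem sub_one_le_sq_div_sqrt_one_add_sq {r : ℝ} (hr : 0 ≤ r) :
    r - 1 ≤ r ^ 2 / √(1 + r ^ 2) := by
  have hsqrt : √(1 + r ^ 2) ≤ 1 + r := Real.sqrt_le_iff.mpr ⟨by positivity, by nlinarith⟩
  calc r - 1 ≤ r ^ 2 / (1 + r) := by rw [le_div_iff₀ (by positivity)]; nlinarith
    _ ≤ r ^ 2 / √(1 + r ^ 2) := by gcongr

theorem le_stretchedExpLaplacianRatio (N : ℕ) {a ρ r : ℝ} (ha : 0 ≤ a) (hρ : 0 ≤ ρ)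
    (hρa : ρ ≤ 9 / 4 * a ^ 2) (hr : 0 ≤ r) :
    ρ * (r - 1) - 3 / 2 * N * a ≤ stretchedExpLaplacianRatio N a (3 / 4) (r ^ 2) := by
  rw [stretchedExpLaplacianRatio]
  set u := 1 + r ^ 2
  have hu : 1 ≤ u := le_add_of_nonneg_right (sq_nonneg r)
  set q := u ^ ((3 : ℝ) / 4 - 1)
  have hq_sq : q ^ 2 = (√u)⁻¹ := by
    rw [← rpow_natCast, ← rpow_mul (by positivity), sqrt_eq_rpow, ← rpow_neg (by positivity)]
    norm_num
  have hq_le : q ≤ 1 := rpow_le_one_of_one_le_of_nonpos hu (by norm_num)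
  have hr_q : r - 1 ≤ r ^ 2 * q ^ 2 := by
    rw [hq_sq, ← div_eq_mul_inv]; exact sub_one_le_sq_div_sqrt_one_add_sq hr
  have hcurv : 0 ≤ a * r ^ 2 * u ^ ((3 : ℝ) / 4 - 2) := by positivity
  nlinarith [mul_le_mul_of_nonneg_left hr_q hρ,
    mul_le_mul_of_nonneg_right hρa (by positivity : 0 ≤ r ^ 2 * q ^ 2),
    mul_le_mul_of_nonneg_left hq_le (by positivity : (0 : ℝ) ≤ N * a)]

theorem integral_mul_norm_sub_le {E : Type*} [NormedAddCommGroup E] [MeasurableSpace E]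
    {μ : Measure E} {g : E → ℝ} (hg0 : ∀ v, 0 ≤ g v) (hg : Integrable g μ)
    (hg1 : Integrable (fun v => g v * ‖v‖) μ) (v : E) :
    ∫ w, g w * ‖v - w‖ ∂μ ≤ (∫ w, g w ∂μ) * ‖v‖ + ∫ w, g w * ‖w‖ ∂μ := by
  calc ∫ w, g w * ‖v - w‖ ∂μ ≤ ∫ w, (g w * ‖v‖ + g w * ‖w‖) ∂μ := by
        refine integral_mono_of_nonneg (ae_of_all _ fun w => mul_nonneg (hg0 w) (norm_nonneg _))
          ((hg.mul_const _).add hg1) (ae_of_all _ fun w => ?_)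
        dsimp only
        rw [← mul_add]
        exact mul_le_mul_of_nonneg_left (norm_sub_le v w) (hg0 w)
    _ = (∫ w, g w ∂μ) * ‖v‖ + ∫ w, g w * ‖w‖ ∂μ := by
        rw [integral_add (hg.mul_const _) hg1, integral_mul_const]

def comparisonOperator {N : ℕ} (g : EuclideanSpace ℝ (Fin N) → ℝ)
    (h : ℝ → EuclideanSpace ℝ (Fin N) → ℝ) (t : ℝ) (v : EuclideanSpace ℝ (Fin N)) : ℝ :=
  -deriv (fun s => h s v) t + laplacian (h t) v - h t v * ∫ vs, g vs * ‖v - vs‖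

theorem comparisonOperator_stretchedExp_nonneg {N : ℕ} {g : EuclideanSpace ℝ (Fin N) → ℝ}
    (hg0 : ∀ v, 0 ≤ g v) (hg : Integrable g) (hg1 : Integrable fun v => g v * ‖v‖)
    {K a b : ℝ} (hK : 0 ≤ K) (ha : 0 ≤ a) (hρa : ∫ v, g v ≤ 9 / 4 * a ^ 2)
    (hb : 3 * N * a / 2 + (∫ v, g v) + (∫ v, g v * ‖v‖) ≤ b) (t : ℝ)
    (v : EuclideanSpace ℝ (Fin N)) :
    0 ≤ comparisonOperator g
      (fun s w => K * exp (-b * s - a * (1 + ‖w‖ ^ 2) ^ ((3 : ℝ) / 4))) t v := by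
  have hderiv : deriv (fun s => K * exp (-b * s - a * (1 + ‖v‖ ^ 2) ^ ((3 : ℝ) / 4))) t
      = -b * (K * exp (-b * t - a * (1 + ‖v‖ ^ 2) ^ ((3 : ℝ) / 4))) :=
    ((((hasDerivAt_id' t).const_mul (-b)).sub_const _).exp.const_mul K).deriv.trans (by ring)
  set H := K * exp (-b * t - a * (1 + ‖v‖ ^ 2) ^ ((3 : ℝ) / 4))
  have hH : 0 ≤ H := by positivity
  have hloss := integral_mul_norm_sub_le hg0 hg hg1 v
  have hratio := le_stretchedExpLaplacianRatio N ha (integral_nonneg hg0) hρa (norm_nonneg v)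
  simp only [comparisonOperator]
  rw [hderiv, laplacian_stretchedExp]
  calc 0 ≤ H * (b + stretchedExpLaplacianRatio N a (3 / 4) (‖v‖ ^ 2) - ∫ vs, g vs * ‖v - vs‖) :=
        mul_nonneg hH (by linarith)
    _ = _ := by ring

theorem stretched_exponential_parabolic_subsolution_general
    (N : ℕ) (g : EuclideanSpace ℝ (Fin N) → ℝ)
    (hg0 : ∀ v, 0 ≤ g v)
    (hgint : Integrable g volume)
    (hg1 : Integrable (fun v => g v * ‖v‖) volume)
    (K : ℝ) (hK : 0 < K) :
    (∃ a : ℝ, 0 < a ∧ ∃ b : ℝ, 0 < b ∧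
      ∀ t : ℝ, 0 < t → ∀ v : EuclideanSpace ℝ (Fin N),
        0 ≤ -(deriv (fun s : ℝ =>
                K * Real.exp (-b * s - a * (1 + ‖v‖ ^ 2) ^ ((3 : ℝ) / 4))) t)
            + laplacian (fun w =>
                K * Real.exp (-b * t - a * (1 + ‖w‖ ^ 2) ^ ((3 : ℝ) / 4))) v
            - (K * Real.exp (-b * t - a * (1 + ‖v‖ ^ 2) ^ ((3 : ℝ) / 4))) *
                ∫ vs : EuclideanSpace ℝ (Fin N), g vs * ‖v - vs‖) ∧
    (∀ a b : ℝ, 0 < a →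
      (∫ v : EuclideanSpace ℝ (Fin N), g v) ≤ (9 / 4) * a ^ 2 →
      (3 * (N : ℝ) * a) / 2 + (∫ v : EuclideanSpace ℝ (Fin N), g v)
          + (∫ v : EuclideanSpace ℝ (Fin N), g v * ‖v‖) ≤ b →
      ∀ t : ℝ, 0 < t → ∀ v : EuclideanSpace ℝ (Fin N),
        0 ≤ -(deriv (fun s : ℝ =>
                K * Real.exp (-b * s - a * (1 + ‖v‖ ^ 2) ^ ((3 : ℝ) / 4))) t)
            + laplacian (fun w =>
                K * Real.exp (-b * t - a * (1 + ‖w‖ ^ 2) ^ ((3 : ℝ) / 4))) v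
            - (K * Real.exp (-b * t - a * (1 + ‖v‖ ^ 2) ^ ((3 : ℝ) / 4))) *
                ∫ vs : EuclideanSpace ℝ (Fin N), g vs * ‖v - vs‖) := by
  set ρ₀ := ∫ v, g v
  set ρ₁ := ∫ v, g v * ‖v‖
  have hρ₀ : 0 ≤ ρ₀ := integral_nonneg hg0
  have hρ₁ : 0 ≤ ρ₁ := integral_nonneg fun v => mul_nonneg (hg0 v) (norm_nonneg v)
  have sufficient (a b : ℝ) (ha : 0 < a) (hρ₀a : ρ₀ ≤ 9 / 4 * a ^ 2)
      (hb : 3 * N * a / 2 + ρ₀ + ρ₁ ≤ b) (t : ℝ) (_ : 0 < t) (v : EuclideanSpace ℝ (Fin N)) :=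
    comparisonOperator_stretchedExp_nonneg hg0 hgint hg1 hK.le ha.le hρ₀a hb t v
  refine ⟨⟨ρ₀ + 1, by positivity, 3 * N * (ρ₀ + 1) / 2 + ρ₀ + ρ₁ + 1, by positivity, ?_⟩,
    sufficient⟩
  exact sufficient _ _ (by positivity) (by nlinarith) (by linarith)

/-- `h(v,t) = K exp(−bt − a(1+|v|²)^{3/4})` is a subsolution of the parabolic
comparison equation `−∂_t h + Δ_v h − Q⁻(g,h) = 0`: there exist `a, b > 0` such
that `−∂_t h + Δ_v h − h·∫g(v_*)|v−v_*| dv_* ≥ 0` for all `t > 0`, `v ∈ ℝ^N`;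
in particular it suffices to take `a` with `(9/4)a² ≥ ρ₀ = ∫g` and then
`b ≥ (3Na)/2 + ρ₀ + ρ₁`, where `ρ₁ = ∫g(v)|v| dv`. -/
theorem stretched_exponential_parabolic_subsolution
    (N : ℕ) (hN : 1 ≤ N) (g : EuclideanSpace ℝ (Fin N) → ℝ)
    (hg0 : ∀ v, 0 ≤ g v)
    (hgint : Integrable g volume)
    (hg1 : Integrable (fun v => g v * ‖v‖) volume)
    (K : ℝ) (hK : 0 < K) :
    (∃ a : ℝ, 0 < a ∧ ∃ b : ℝ, 0 < b ∧
      ∀ t : ℝ, 0 < t → ∀ v : EuclideanSpace ℝ (Fin N),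
        0 ≤ -(deriv (fun s : ℝ =>
                K * Real.exp (-b * s - a * (1 + ‖v‖ ^ 2) ^ ((3 : ℝ) / 4))) t)
            + laplacian (fun w =>
                K * Real.exp (-b * t - a * (1 + ‖w‖ ^ 2) ^ ((3 : ℝ) / 4))) v
            - (K * Real.exp (-b * t - a * (1 + ‖v‖ ^ 2) ^ ((3 : ℝ) / 4))) *
                ∫ vs : EuclideanSpace ℝ (Fin N), g vs * ‖v - vs‖) ∧
    (∀ a b : ℝ, 0 < a →
      (∫ v : EuclideanSpace ℝ (Fin N), g v) ≤ (9 / 4) * a ^ 2 →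
      (3 * (N : ℝ) * a) / 2 + (∫ v : EuclideanSpace ℝ (Fin N), g v)
          + (∫ v : EuclideanSpace ℝ (Fin N), g v * ‖v‖) ≤ b →
      ∀ t : ℝ, 0 < t → ∀ v : EuclideanSpace ℝ (Fin N),
        0 ≤ -(deriv (fun s : ℝ =>
                K * Real.exp (-b * s - a * (1 + ‖v‖ ^ 2) ^ ((3 : ℝ) / 4))) t)
            + laplacian (fun w =>
                K * Real.exp (-b * t - a * (1 + ‖w‖ ^ 2) ^ ((3 : ℝ) / 4))) v
            - (K * Real.exp (-b * t - a * (1 + ‖v‖ ^ 2) ^ ((3 : ℝ) / 4))) *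
                ∫ vs : EuclideanSpace ℝ (Fin N), g vs * ‖v - vs‖) :=
  stretched_exponential_parabolic_subsolution_general N g hg0 hgint hg1 K hK
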